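/- Let A_l ∈ ℂ^{n_l×n_l}, B_l ∈ ℂ^{n_l×m_l}, C_l ∈ ℂ^{m_l×n_l} and A_r ∈ ℂ^{n_r×n_r}, B_r ∈ ℂ^{n_r×m_r}, C_r ∈ ℂ^{m_r×n_r}, and set F_r(z) = I_{m_r} + C_r(zI_{n_r} − A_r)^{-1}B_r. Define the inflated realization matrices 𝐀_o = [[A_l ⊗ I_{m_r}, (B_l ⊗ I_{m_r})(I_{m_l} ⊗ C_r)],[0, I_{m_l} ⊗ A_r]], 𝐁_o = [B_l ⊗ I_{m_r} ; I_{m_l} ⊗ B_r], 𝐂_o = [C_l ⊗ I_{m_r} I_{m_l} ⊗ C_r]. Let T ∈ ℂ^{(n_lm_r+m_ln_r)×(n_lm_r+m_ln_r)} be invertible and set 𝐀 = T^{-1}𝐀_oT, 𝐁 = T^{-1}𝐁_o, 𝐂 = 𝐂_oT. Let v ∈ ℂ^{m_l} with v*v = 1 and define Π̂ = T^{-1} diag(0_{n_lm_r}, vv* ⊗ I_{n_r}) T. Then for every z ∈ ℂ such that zI_{n_l} − A_l and zI_{n_r} − A_r are invertible, zI_{n_lm_r+m_ln_r} − 𝐀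 is invertible and F_r(z) = (v* ⊗ I_{m_r}) 𝐂 Π̂ (zI_{n_lm_r+m_ln_r} − 𝐀)^{-1} Π̂ 𝐁 (v ⊗ I_{m_r}) + I_{m_r}. -/

import Mathlib

/-!
After undoing the similarity `T`, `zI - 𝐀_o` is block upper triangular with diagonal blocks
`(zI - A_l) ⊗ I` and `I ⊗ (zI - A_r)`, hence invertible. The projection `diag(0, vv* ⊗ I)`
compresses its inverse to `(vv* ⊗ I)(I ⊗ (zI - A_r)⁻¹)(vv* ⊗ I)`, discarding the coupling block.
Since `I ⊗ X` commutes with `vv* ⊗ I`, sandwiching with `v* ⊗ I`, `I ⊗ C_r`, `I ⊗ B_r`, `v ⊗ I`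
leaves `(v*v)³ ⊗ C_r(zI - A_r)⁻¹B_r = 1 ⊗ (F_r(z) - I)`.
-/

open Matrix
open scoped Kronecker

namespace Matrix

section Kronecker

variable {α : Type*} [CommRing α] {l m n p : Type*}

theorem sub_kronecker (A B : Matrix l m α) (C : Matrix n p α) :
    (A - B) ⊗ₖ C = A ⊗ₖ C - B ⊗ₖ C := by
  ext; simp [kroneckerMap_apply, sub_mul]

theorem kronecker_sub (A : Matrix l m α) (B C : Matrix n p α) :
    A ⊗ₖ (B - C) = A ⊗ₖ B - A ⊗ₖ C := by
  ext; simp [kroneckerMap_apply, mul_sub]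

theorem smul_one_sub_kronecker_one [DecidableEq m] [DecidableEq n] (z : α) (A : Matrix m m α) :
    z • 1 - A ⊗ₖ (1 : Matrix n n α) = (z • 1 - A) ⊗ₖ 1 := by
  rw [sub_kronecker, smul_kronecker, one_kronecker_one]

theorem smul_one_sub_one_kronecker [DecidableEq m] [DecidableEq n] (z : α) (A : Matrix n n α) :
    z • 1 - (1 : Matrix m m α) ⊗ₖ A = 1 ⊗ₖ (z • 1 - A) := by
  rw [kronecker_sub, kronecker_smul, one_kronecker_one]

theorem isUnit_kronecker [Fintype m] [Fintype n] [DecidableEq m] [DecidableEq n]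
    {A : Matrix m m α} {B : Matrix n n α} (hA : IsUnit A) (hB : IsUnit B) :
    IsUnit (A ⊗ₖ B) := by
  rw [isUnit_iff_isUnit_det] at hA hB ⊢
  rw [det_kronecker]
  exact (hA.pow _).mul (hB.pow _)

theorem reindex_uniqueProd_one_kronecker {ι : Type*} [Unique ι] [DecidableEq ι]
    (W : Matrix m n α) :
    reindex (Equiv.uniqueProd m ι) (Equiv.uniqueProd n ι) ((1 : Matrix ι ι α) ⊗ₖ W) = W := by
  ext i j
  simp [Equiv.uniqueProd]

theorem one_kronecker_sandwich_of_mul_eq_one {ι : Type*} [Fintype ι] [Fintype l] [Fintype m]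
    [Fintype n] [Fintype p] [DecidableEq ι] [DecidableEq l] [DecidableEq m] [DecidableEq n]
    [DecidableEq p]
    {w : Matrix ι m α} {v : Matrix m ι α} (hwv : w * v = 1)
    (X : Matrix l n α) (Y : Matrix n n α) (Z : Matrix n p α) :
    (w ⊗ₖ (1 : Matrix l l α)) * ((1 : Matrix m m α) ⊗ₖ X *
        ((v * w) ⊗ₖ (1 : Matrix n n α) * (1 ⊗ₖ Y) * (v * w) ⊗ₖ 1) *
        (1 : Matrix m m α) ⊗ₖ Z) * v ⊗ₖ (1 : Matrix p p α) =
      1 ⊗ₖ (X * Y * Z) := by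
  simp only [← mul_kronecker_mul, Matrix.mul_one, Matrix.one_mul, ← Matrix.mul_assoc, hwv]

end Kronecker

section Blocks

variable {α : Type*} [CommRing α] {l m n : Type*}

theorem smul_one_sub_fromBlocks_zero₂₁ [DecidableEq m] [DecidableEq n] (z : α)
    (A : Matrix m m α) (B : Matrix m n α) (D : Matrix n n α) :
    z • 1 - fromBlocks A B 0 D = fromBlocks (z • 1 - A) (-B) 0 (z • 1 - D) := by
  rw [← fromBlocks_one, fromBlocks_smul, sub_eq_add_neg, fromBlocks_neg, fromBlocks_add]
  simp [sub_eq_add_neg]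

theorem fromCols_mul_fromBlocks_zero_mul_fromRows [Fintype m] [Fintype n]
    (C₁ : Matrix l m α) (C₂ : Matrix l n α) (Y : Matrix n n α)
    (B₁ : Matrix m l α) (B₂ : Matrix n l α) :
    fromCols C₁ C₂ * fromBlocks (0 : Matrix m m α) 0 0 Y * fromRows B₁ B₂ = C₂ * Y * B₂ := by
  simp [fromCols_mul_fromBlocks, fromCols_mul_fromRows]

theorem fromBlocks_zero_mul_inv_fromBlocks_zero₂₁_mul [Fintype m] [Fintype n]
    [DecidableEq m] [DecidableEq n] {A : Matrix m m α} (B : Matrix m n α) {D : Matrix n n α}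
    (hA : IsUnit A) (hD : IsUnit D) (Q : Matrix n n α) :
    fromBlocks 0 0 0 Q * (fromBlocks A B 0 D)⁻¹ * fromBlocks 0 0 0 Q =
      fromBlocks 0 0 0 (Q * D⁻¹ * Q) := by
  rw [inv_fromBlocks_zero₂₁_of_isUnit_iff A B D (iff_of_true hA hD)]
  simp [fromBlocks_multiply]

end Blocks

section Similarity

variable {α : Type*} [CommRing α] {n : Type*} [Fintype n] [DecidableEq n]
  {T : Matrix n n α}

theorem smul_one_sub_nonsing_inv_mul_mul (hT : IsUnit T) (z : α) (M : Matrix n n α) :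
    z • 1 - T⁻¹ * M * T = T⁻¹ * (z • 1 - M) * T := by
  rw [Matrix.mul_sub, Matrix.sub_mul, Matrix.mul_smul, Matrix.smul_mul, Matrix.mul_one,
    nonsing_inv_mul _ ((isUnit_iff_isUnit_det T).mp hT)]

theorem inv_nonsing_inv_mul_mul (hT : IsUnit T) (M : Matrix n n α) :
    (T⁻¹ * M * T)⁻¹ = T⁻¹ * M⁻¹ * T := by
  rw [Matrix.mul_inv_rev, Matrix.mul_inv_rev,
    nonsing_inv_nonsing_inv _ ((isUnit_iff_isUnit_det T).mp hT), Matrix.mul_assoc]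

end Similarity

end Matrix

/-- Recovery of the right tensor factor from a (coordinate-transformed) realization of the
tensor product: with `𝐀 = T⁻¹𝐀_o T`, `𝐁 = T⁻¹𝐁_o`, `𝐂 = 𝐂_o T` built from the inflated
realization of `F_l ⊗ F_r` (normalized so `D_l = I`, `D_r = I`), a unit vector `v ∈ ℂ^{m_l}`
and `Π̂ = T⁻¹ diag(0, vv* ⊗ I_{n_r}) T`, for every `z` where `zI − A_l` and `zI − A_r` are
invertible, `zI − 𝐀` is invertible and
`F_r(z) = (v* ⊗ I) 𝐂 Π̂ (zI − 𝐀)⁻¹ Π̂ 𝐁 (v ⊗ I) + I`. -/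
theorem recover_right_factor (nl nr ml mr : ℕ)
    (Al : Matrix (Fin nl) (Fin nl) ℂ) (Bl : Matrix (Fin nl) (Fin ml) ℂ)
    (Cl : Matrix (Fin ml) (Fin nl) ℂ)
    (Ar : Matrix (Fin nr) (Fin nr) ℂ) (Br : Matrix (Fin nr) (Fin mr) ℂ)
    (Cr : Matrix (Fin mr) (Fin nr) ℂ)
    (T : Matrix ((Fin nl × Fin mr) ⊕ (Fin ml × Fin nr))
        ((Fin nl × Fin mr) ⊕ (Fin ml × Fin nr)) ℂ) (hT : IsUnit T)
    (v : Matrix (Fin ml) (Fin 1) ℂ) (hv : vᴴ * v = 1)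
    (z : ℂ)
    (hl : IsUnit (z • (1 : Matrix (Fin nl) (Fin nl) ℂ) - Al))
    (hr : IsUnit (z • (1 : Matrix (Fin nr) (Fin nr) ℂ) - Ar)) :
    let Ao := fromBlocks (Al ⊗ₖ (1 : Matrix (Fin mr) (Fin mr) ℂ))
        ((Bl ⊗ₖ (1 : Matrix (Fin mr) (Fin mr) ℂ)) * ((1 : Matrix (Fin ml) (Fin ml) ℂ) ⊗ₖ Cr))
        0 ((1 : Matrix (Fin ml) (Fin ml) ℂ) ⊗ₖ Ar)
    let Bo := fromRows (Bl ⊗ₖ (1 : Matrix (Fin mr) (Fin mr) ℂ))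
        ((1 : Matrix (Fin ml) (Fin ml) ℂ) ⊗ₖ Br)
    let Co := fromCols (Cl ⊗ₖ (1 : Matrix (Fin mr) (Fin mr) ℂ))
        ((1 : Matrix (Fin ml) (Fin ml) ℂ) ⊗ₖ Cr)
    let A := T⁻¹ * Ao * T
    let B := T⁻¹ * Bo
    let C := Co * T
    let Ph := T⁻¹ * fromBlocks (0 : Matrix (Fin nl × Fin mr) (Fin nl × Fin mr) ℂ) 0 0
        ((v * vᴴ) ⊗ₖ (1 : Matrix (Fin nr) (Fin nr) ℂ)) * T
    IsUnit (z • (1 : Matrix ((Fin nl × Fin mr) ⊕ (Fin ml × Fin nr))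
        ((Fin nl × Fin mr) ⊕ (Fin ml × Fin nr)) ℂ) - A) ∧
    1 + Cr * (z • 1 - Ar)⁻¹ * Br =
      Matrix.reindex (Equiv.uniqueProd (Fin mr) (Fin 1)) (Equiv.uniqueProd (Fin mr) (Fin 1))
        ((vᴴ ⊗ₖ (1 : Matrix (Fin mr) (Fin mr) ℂ)) * C * Ph *
          (z • 1 - A)⁻¹ * Ph * B * (v ⊗ₖ (1 : Matrix (Fin mr) (Fin mr) ℂ))) + 1 := by
  intro Ao Bo Co A B C Ph
  have hTdet : IsUnit T.det := (isUnit_iff_isUnit_det T).mp hT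
  have hresolvent : z • 1 - Ao = fromBlocks ((z • 1 - Al) ⊗ₖ (1 : Matrix (Fin mr) (Fin mr) ℂ))
      (-((Bl ⊗ₖ (1 : Matrix (Fin mr) (Fin mr) ℂ)) * ((1 : Matrix (Fin ml) (Fin ml) ℂ) ⊗ₖ Cr)))
      0 ((1 : Matrix (Fin ml) (Fin ml) ℂ) ⊗ₖ (z • 1 - Ar)) := by
    rw [smul_one_sub_fromBlocks_zero₂₁, smul_one_sub_kronecker_one, smul_one_sub_one_kronecker]
  have hl' := isUnit_kronecker hl (isUnit_one (M := Matrix (Fin mr) (Fin mr) ℂ))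
  have hr' := isUnit_kronecker (isUnit_one (M := Matrix (Fin ml) (Fin ml) ℂ)) hr
  have hsim : z • 1 - A = T⁻¹ * (z • 1 - Ao) * T := smul_one_sub_nonsing_inv_mul_mul hT z Ao
  refine ⟨?_, ?_⟩
  · rw [hsim, hresolvent]
    exact ((isUnit_nonsing_inv_iff.2 hT).mul (isUnit_fromBlocks_zero₂₁.2 ⟨hl', hr'⟩)).mul hT
  · set I : Matrix (Fin mr) (Fin mr) ℂ := 1
    set P := fromBlocks (0 : Matrix (Fin nl × Fin mr) (Fin nl × Fin mr) ℂ) 0 0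
        ((v * vᴴ) ⊗ₖ (1 : Matrix (Fin nr) (Fin nr) ℂ))
    have hcompress : (vᴴ ⊗ₖ I) * C * Ph * (z • 1 - A)⁻¹ * Ph * B * (v ⊗ₖ I) =
        (vᴴ ⊗ₖ I) * (Co * (P * (z • 1 - Ao)⁻¹ * P) * Bo) * (v ⊗ₖ I) := by
      rw [hsim, inv_nonsing_inv_mul_mul hT]
      simp only [C, Ph, B, P, Matrix.mul_assoc, mul_nonsing_inv_cancel_left _ _ hTdet]
    rw [hcompress, hresolvent, fromBlocks_zero_mul_inv_fromBlocks_zero₂₁_mul _ hl' hr',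
      inv_kronecker, inv_one, fromCols_mul_fromBlocks_zero_mul_fromRows,
      one_kronecker_sandwich_of_mul_eq_one hv, reindex_uniqueProd_one_kronecker,
      Matrix.mul_assoc Cr, add_comm]
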